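/- Let X be a real Banach space, let (S(t))_{t ≥ 0} be a continuous semigroup of contractions on X, let F : X → X be Lipschitz continuous, and let U₀ ∈ X. Then there exists a unique continuous curve U : [0, ∞) → X satisfying U(t) = S(t)U₀ − ∫₀ᵗ S(t−s) F(U(s)) ds for all t ≥ 0; that is, there exists a unique mild solution with initial datum U₀. -/

import Mathlib

/-!
The right-hand side `Φ` of the Duhamel formula is of Volterra type: since `‖S t‖ ≤ 1` and `F` is
`L`-Lipschitz, `‖Φ u t - Φ v t‖ ≤ L ∫₀ᵗ ‖u s - v s‖ ds`. Iterating, `Φ^[n]` is Lipschitz on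
`C([0, T], X)` with constant `(L T)ⁿ / n!`, so some iterate is a contraction and `Φ` has a unique
fixed point there: the unique mild solution on `[0, T]`. By uniqueness the solutions on the
intervals `[0, T]` are compatible, and they glue to the mild solution on `[0, ∞)`.
-/

open Set MeasureTheory Function Filter Topology
open scoped Nat

theorem continuous_uncurry_apply_of_norm_le {α 𝕜 E F : Type*} [TopologicalSpace α]
    [NontriviallyNormedField 𝕜] [SeminormedAddCommGroup E] [NormedSpace 𝕜 E]
    [SeminormedAddCommGroup F] [NormedSpace 𝕜 F] {S : α → E →L[𝕜] F} {C : ℝ}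
    (hS : ∀ a, ‖S a‖ ≤ C) (hSx : ∀ x, Continuous fun a => S a x) :
    Continuous fun p : α × E => S p.1 p.2 := by
  refine continuous_iff_continuousAt.2 fun ⟨a₀, x₀⟩ => ?_
  have hsmall : Tendsto (fun p : α × E => S p.1 (p.2 - x₀)) (𝓝 (a₀, x₀)) (𝓝 0) := by
    refine squeeze_zero_norm (fun p => (S p.1).le_of_opNorm_le (hS p.1) _) ?_
    simpa using
      ((continuous_snd.sub (continuous_const (y := x₀))).norm.const_mul C).tendsto (a₀, x₀)
  have hfar : Tendsto (fun p : α × E => S p.1 x₀) (𝓝 (a₀, x₀)) (𝓝 (S a₀ x₀)) :=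
    ((hSx x₀).comp continuous_fst).tendsto (a₀, x₀)
  simpa [ContinuousAt] using hsmall.add hfar

theorem integral_pow_div_factorial (K t : ℝ) (n : ℕ) :
    K * ∫ s in (0:ℝ)..t, (K * s) ^ n / n ! = (K * t) ^ (n + 1) / (n + 1)! := by
  simp only [mul_pow, intervalIntegral.integral_div, intervalIntegral.integral_const_mul,
    integral_pow, zero_pow n.succ_ne_zero, sub_zero]
  push_cast [Nat.factorial_succ]
  field_simp
  ring

section Volterra

variable {E : Type*} [NormedAddCommGroup E] {T K : ℝ} (hT : 0 ≤ T)
  {Φ : C(Icc 0 T, E) → C(Icc 0 T, E)} (hK : 0 ≤ K)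
  (hΦ : ∀ u v (t : Icc 0 T),
    ‖Φ u t - Φ v t‖ ≤ K * ∫ s in (0:ℝ)..t, ‖IccExtend hT u s - IccExtend hT v s‖)
include hT hK hΦ

theorem norm_iterate_sub_le_of_volterra (u v : C(Icc 0 T, E)) (n : ℕ) (t : Icc 0 T) :
    ‖Φ^[n] u t - Φ^[n] v t‖ ≤ (K * t) ^ n / n ! * ‖u - v‖ := by
  induction n generalizing t with
  | zero => simpa using (u - v).norm_coe_le_norm t
  | succ n ih =>
    rw [iterate_succ_apply', iterate_succ_apply', ← integral_pow_div_factorial,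
      mul_assoc, ← intervalIntegral.integral_mul_const]
    refine (hΦ _ _ t).trans (mul_le_mul_of_nonneg_left ?_ hK)
    refine intervalIntegral.integral_mono_on t.2.1 ?_ ?_ fun s hs => ?_
    · exact ((Φ^[n] u).continuous.Icc_extend'.sub
        (Φ^[n] v).continuous.Icc_extend').norm.intervalIntegrable _ _
    · exact (((continuous_const.mul continuous_id).pow n).div_const _).mul_const _
        |>.intervalIntegrable _ _
    · have hsT : s ∈ Icc 0 T := ⟨hs.1, hs.2.trans t.2.2⟩
      simpa only [IccExtend_of_mem _ _ hsT] using ih ⟨s, hsT⟩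

theorem exists_contractingWith_iterate_of_volterra :
    ∃ (n : ℕ) (q : NNReal), ContractingWith q Φ^[n] := by
  obtain ⟨n, hn⟩ : ∃ n : ℕ, (K * T) ^ n / n ! < 1 :=
    ((FloorSemiring.tendsto_pow_div_factorial_atTop (K * T)).eventually
      (gt_mem_nhds zero_lt_one)).exists
  have hq : 0 ≤ (K * T) ^ n / n ! := by positivity
  refine ⟨n, Real.toNNReal _, by simpa using hn, LipschitzWith.of_dist_le_mul fun u v => ?_⟩
  rw [dist_eq_norm, dist_eq_norm, Real.coe_toNNReal _ hq]
  refine (ContinuousMap.norm_le _ (by positivity)).2 fun t => ?_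
  refine (norm_iterate_sub_le_of_volterra hT hK hΦ u v n t).trans ?_
  have hKt : K * t ≤ K * T := mul_le_mul_of_nonneg_left t.2.2 hK
  gcongr (?_ : ℝ) / _ * _
  exact pow_le_pow_left₀ (mul_nonneg hK t.2.1) hKt n

theorem existsUnique_isFixedPt_of_volterra [CompleteSpace E] :
    ∃! u, IsFixedPt Φ u := by
  have : Nonempty (Icc 0 T) := ⟨⟨0, le_rfl, hT⟩⟩
  obtain ⟨n, q, hq⟩ := exists_contractingWith_iterate_of_volterra hT hK hΦ
  exact ⟨_, hq.isFixedPt_fixedPoint_iterate, fun v hv => hq.fixedPoint_unique (hv.iterate n)⟩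

end Volterra

section Duhamel

variable {X : Type*} [NormedAddCommGroup X] [NormedSpace ℝ X]
  {S : ℝ → X →L[ℝ] X} {F : X → X} {U₀ : X}

noncomputable def duhamel (S : ℝ → X →L[ℝ] X) (F : X → X) (U₀ : X) (u : ℝ → X) (t : ℝ) : X :=
  S t U₀ - ∫ s in (0:ℝ)..t, S (t - s) (F (u s))

def IsMildSolutionOn (S : ℝ → X →L[ℝ] X) (F : X → X) (U₀ : X) (I : Set ℝ) (u : ℝ → X) : Prop :=
  ContinuousOn u I ∧ ∀ t ∈ I, u t = duhamel S F U₀ u t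

theorem duhamel_congr {u v : ℝ → X} {t : ℝ} (ht : 0 ≤ t) (h : EqOn u v (Icc 0 t)) :
    duhamel S F U₀ u t = duhamel S F U₀ v t := by
  refine congrArg _ (intervalIntegral.integral_congr fun s hs => ?_)
  rw [uIcc_of_le ht] at hs
  simp only [h hs]

theorem IsMildSolutionOn.mono {I J : Set ℝ} {u : ℝ → X} (hu : IsMildSolutionOn S F U₀ J u)
    (hIJ : I ⊆ J) : IsMildSolutionOn S F U₀ I u :=
  ⟨hu.1.mono hIJ, fun t ht => hu.2 t (hIJ ht)⟩

theorem IsMildSolutionOn.congr_Icc {T : ℝ} {u v : ℝ → X}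
    (hu : IsMildSolutionOn S F U₀ (Icc 0 T) u) (h : EqOn u v (Icc 0 T)) :
    IsMildSolutionOn S F U₀ (Icc 0 T) v := by
  refine ⟨hu.1.congr h.symm, fun t ht => ?_⟩
  rw [← h ht, hu.2 t ht]
  exact duhamel_congr ht.1 (h.mono (Icc_subset_Icc_right ht.2))

theorem eqOn_uIcc_apply_max_zero (g : ℝ → X) {t : ℝ} (ht : 0 ≤ t) :
    EqOn (fun s => S (t - s) (g s)) (fun s => S (max (t - s) 0) (g s)) (uIcc 0 t) := by
  intro s hs
  rw [uIcc_of_le ht] at hs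
  simp only [max_eq_left (sub_nonneg.2 hs.2)]

variable {M : ℝ} (hS_bdd : ∀ t ≥ (0:ℝ), ‖S t‖ ≤ M)
  (hS_cont : ∀ x : X, ContinuousOn (fun t => S t x) (Ici 0))
include hS_bdd hS_cont

-- `S` is only controlled on `[0, ∞)`; clamping the time at `0` makes the Duhamel integrand
-- `(t, s) ↦ S (t - s) (F (u s))` continuous on all of `ℝ × ℝ` without changing it for `s ≤ t`.
theorem continuous_apply_max_zero : Continuous fun p : ℝ × X => S (max p.1 0) p.2 :=
  continuous_uncurry_apply_of_norm_le (S := fun t => S (max t 0))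
    (fun t => hS_bdd _ (le_max_right t 0)) fun x =>
    (hS_cont x).comp_continuous (continuous_id.max continuous_const)
      fun t => le_max_right t 0

theorem continuousOn_uIcc_duhamel_integrand {g : ℝ → X} (hg : Continuous g) {t : ℝ}
    (ht : 0 ≤ t) : ContinuousOn (fun s => S (t - s) (g s)) (uIcc 0 t) :=
  ((continuous_apply_max_zero hS_bdd hS_cont).comp
    ((continuous_const.sub continuous_id).prodMk hg)).continuousOn.congr
    (eqOn_uIcc_apply_max_zero g ht)

theorem continuousOn_duhamel {u : ℝ → X} (hu : Continuous u) (hF : Continuous F) :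
    ContinuousOn (duhamel S F U₀ u) (Ici 0) := by
  have hmax :
      Continuous fun t => S (max t 0) U₀ - ∫ s in (0:ℝ)..t, S (max (t - s) 0) (F (u s)) :=
    ((hS_cont U₀).comp_continuous (continuous_id.max continuous_const)
      fun t => le_max_right t 0).sub <|
    intervalIntegral.continuous_parametric_intervalIntegral_of_continuous
      (f := fun t s => S (max (t - s) 0) (F (u s)))
      ((continuous_apply_max_zero hS_bdd hS_cont).comp
        ((continuous_fst.sub continuous_snd).prodMk ((hF.comp hu).comp continuous_snd)))
      continuous_id
  refine hmax.continuousOn.congr fun t (ht : 0 ≤ t) => ?_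
  simp only [duhamel, max_eq_left ht]
  exact congrArg _ (intervalIntegral.integral_congr (eqOn_uIcc_apply_max_zero (F ∘ u) ht))

theorem norm_duhamel_sub_le {L : NNReal} (hF : LipschitzWith L F) {u v : ℝ → X}
    (hu : Continuous u) (hv : Continuous v) {t : ℝ} (ht : 0 ≤ t) :
    ‖duhamel S F U₀ u t - duhamel S F U₀ v t‖ ≤ M * L * ∫ s in (0:ℝ)..t, ‖u s - v s‖ := by
  have hint : ∀ w : ℝ → X, Continuous w →
      IntervalIntegrable (fun s => S (t - s) (F (w s))) volume 0 t := fun w hw =>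
    (continuousOn_uIcc_duhamel_integrand hS_bdd hS_cont (hF.continuous.comp hw)
      ht).intervalIntegrable
  rw [duhamel, duhamel, sub_sub_sub_cancel_left,
    ← intervalIntegral.integral_sub (hint v hv) (hint u hu),
    ← intervalIntegral.integral_const_mul]
  refine (intervalIntegral.norm_integral_le_integral_norm ht).trans ?_
  refine intervalIntegral.integral_mono_on ht ?_ ?_ fun s hs => ?_
  · exact ((hint v hv).sub (hint u hu)).norm
  · exact ((hu.sub hv).norm.const_mul _).intervalIntegrable _ _
  · calc ‖S (t - s) (F (v s)) - S (t - s) (F (u s))‖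
        ≤ M * ‖F (v s) - F (u s)‖ := by
          rw [← map_sub]; exact (S _).le_of_opNorm_le (hS_bdd _ (sub_nonneg.2 hs.2)) _
      _ ≤ M * (L * ‖u s - v s‖) := by
          gcongr
          · exact (norm_nonneg _).trans (hS_bdd 0 le_rfl)
          · rw [norm_sub_rev]; exact hF.norm_sub_le _ _
      _ = M * L * ‖u s - v s‖ := (mul_assoc _ _ _).symm

variable [CompleteSpace X] {L : NNReal} (hF : LipschitzWith L F)
include hF

theorem exists_isMildSolutionOn_Icc_forall_eqOn {T : ℝ} (hT : 0 ≤ T) :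
    ∃ u, IsMildSolutionOn S F U₀ (Icc 0 T) u ∧
      ∀ v, IsMildSolutionOn S F U₀ (Icc 0 T) v → EqOn u v (Icc 0 T) := by
  let Φ : C(Icc 0 T, X) → C(Icc 0 T, X) := fun w =>
    ⟨(Icc 0 T).domRestrict (duhamel S F U₀ (IccExtend hT w)),
      ((continuousOn_duhamel hS_bdd hS_cont w.continuous.Icc_extend' hF.continuous).mono
        Icc_subset_Ici_self).domRestrict⟩
  have hfix : ∀ w, IsFixedPt Φ w ↔ IsMildSolutionOn S F U₀ (Icc 0 T) (IccExtend hT w) := by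
    refine fun w => ⟨fun h => ⟨w.continuous.Icc_extend'.continuousOn, fun t ht => ?_⟩,
      fun h => ContinuousMap.ext fun t => ?_⟩
    · rw [IccExtend_of_mem _ _ ht]
      exact (DFunLike.congr_fun h ⟨t, ht⟩).symm
    · exact (h.2 t t.2).symm.trans (IccExtend_val _ _ t)
  have hM : 0 ≤ M := (norm_nonneg _).trans (hS_bdd 0 le_rfl)
  obtain ⟨w, hw, hw_unique⟩ := existsUnique_isFixedPt_of_volterra (Φ := Φ) hT
    (mul_nonneg hM L.coe_nonneg) fun u v t =>
      norm_duhamel_sub_le hS_bdd hS_cont hF u.continuous.Icc_extend' v.continuous.Icc_extend'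
        t.2.1
  refine ⟨IccExtend hT w, (hfix w).1 hw, fun v hv => ?_⟩
  let wv : C(Icc 0 T, X) := ⟨(Icc 0 T).domRestrict v, hv.1.domRestrict⟩
  have hext : EqOn v (IccExtend hT wv) (Icc 0 T) := fun t ht =>
    (IccExtend_of_mem hT wv ht).symm
  rw [← hw_unique wv ((hfix wv).2 (hv.congr_Icc hext))]
  exact hext.symm

theorem IsMildSolutionOn.eqOn_Icc {T : ℝ} (hT : 0 ≤ T) {u v : ℝ → X}
    (hu : IsMildSolutionOn S F U₀ (Icc 0 T) u) (hv : IsMildSolutionOn S F U₀ (Icc 0 T) v) :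
    EqOn u v (Icc 0 T) := by
  obtain ⟨w, -, hw⟩ := exists_isMildSolutionOn_Icc_forall_eqOn hS_bdd hS_cont hF (U₀ := U₀) hT
  exact (hw u hu).symm.trans (hw v hv)

theorem IsMildSolutionOn.eqOn_Ici {u v : ℝ → X} (hu : IsMildSolutionOn S F U₀ (Ici 0) u)
    (hv : IsMildSolutionOn S F U₀ (Ici 0) v) : EqOn u v (Ici 0) := fun _ ht =>
  eqOn_Icc hS_bdd hS_cont hF ht (hu.mono Icc_subset_Ici_self) (hv.mono Icc_subset_Ici_self)
    ⟨ht, le_rfl⟩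

theorem exists_isMildSolutionOn_Ici : ∃ U, IsMildSolutionOn S F U₀ (Ici 0) U := by
  choose! sol hsol using fun T (hT : 0 ≤ T) =>
    (exists_isMildSolutionOn_Icc_forall_eqOn hS_bdd hS_cont hF (U₀ := U₀) hT).imp fun _ h => h.1
  have hglue : ∀ T, 0 ≤ T → EqOn (fun t => sol t t) (sol T) (Icc 0 T) := fun T hT t ht =>
    (hsol t ht.1).eqOn_Icc hS_bdd hS_cont hF ht.1
      ((hsol T hT).mono (Icc_subset_Icc_right ht.2)) ⟨ht.1, le_rfl⟩
  refine ⟨fun t => sol t t, fun t₀ ht₀ => ?_, fun t ht => ?_⟩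
  · have hT : 0 ≤ t₀ + 1 := by linarith [mem_Ici.1 ht₀]
    have hnhds : Icc 0 (t₀ + 1) ∈ 𝓝[Ici 0] t₀ :=
      mem_nhdsWithin.2 ⟨Iio (t₀ + 1), isOpen_Iio, lt_add_one t₀, fun s hs => ⟨hs.2, hs.1.le⟩⟩
    have ht₀T : t₀ ∈ Icc 0 (t₀ + 1) := ⟨ht₀, (lt_add_one t₀).le⟩
    exact (((hsol _ hT).1 t₀ ht₀T).mono_of_mem_nhdsWithin hnhds).congr_of_eventuallyEq
      (eventually_of_mem hnhds (hglue _ hT)) (hglue _ hT ht₀T)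
  · exact ((hsol t ht).2 t ⟨ht, le_rfl⟩).trans (duhamel_congr ht (hglue t ht).symm)

end Duhamel

theorem mild_solution_exists_unique
    {X : Type*} [NormedAddCommGroup X] [NormedSpace ℝ X] [CompleteSpace X]
    (S : ℝ → X →L[ℝ] X)
    (hS_contr : ∀ t ≥ (0:ℝ), ‖S t‖ ≤ 1)
    (hS_cont : ∀ x : X, ContinuousOn (fun t => S t x) (Set.Ici (0:ℝ)))
    (F : X → X) (L : NNReal) (hF : LipschitzWith L F) (U₀ : X) :
    ∃ U : ℝ → X,
      (ContinuousOn U (Set.Ici 0) ∧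
        ∀ t ≥ (0:ℝ), U t = S t U₀ - ∫ s in (0:ℝ)..t, S (t - s) (F (U s))) ∧
      ∀ V : ℝ → X,
        (ContinuousOn V (Set.Ici 0) ∧
          ∀ t ≥ (0:ℝ), V t = S t U₀ - ∫ s in (0:ℝ)..t, S (t - s) (F (V s))) →
        Set.EqOn U V (Set.Ici 0) := by
  obtain ⟨U, hU⟩ := exists_isMildSolutionOn_Ici hS_contr hS_cont hF (U₀ := U₀)
  exact ⟨U, hU, fun V hV => hU.eqOn_Ici hS_contr hS_cont hF hV⟩
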